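/- arXiv:2403.01337 — 7 statements merged into one kernel-verified Lean document; each statement's English description precedes it below -/
import Mathlib

section
/- Let k be a natural number and let Λ be a connected k-graph such that the canonical localization functor i : Λ ⥤ Π(Λ) is injective on morphisms. If Λ is simply connected, then Λ is singly connected. -/
open CategoryTheory

/-- A `k`-graph structure on a small category `Λ`. -/
structure KGraph (k : ℕ) (Λ : Type) [SmallCategory Λ] where
  d : ∀ {X Y : Λ}, (X ⟶ Y) → (Fin k → ℕ)
  d_id : ∀ X : Λ, d (𝟙 X) = 0
  d_comp : ∀ {X Y Z : Λ} (f : X ⟶ Y) (g : Y ⟶ Z), d (f ≫ g) = d f + d g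
  factorisation : ∀ {X Z : Λ} (f : X ⟶ Z) (m n : Fin k → ℕ), d f = m + n →
    ∃! t : Σ Y : Λ, (X ⟶ Y) × (Y ⟶ Z),
      d t.2.1 = m ∧ d t.2.2 = n ∧ t.2.1 ≫ t.2.2 = f

/-- A functor is injective on morphisms if the induced map on the total space of
morphisms is injective. -/
def InjectiveOnMorphisms {C : Type*} [Category C] {D : Type*} [Category D] (F : C ⥤ D) : Prop :=
  Function.Injective
    (fun t : Σ X Y : C, X ⟶ Y => (⟨F.obj t.1, F.obj t.2.1, F.map t.2.2⟩ : Σ X Y : D, X ⟶ Y))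

/-- `Λ` is connected. -/
def IsConnectedKGraph (Λ : Type) [SmallCategory Λ] : Prop :=
  ∀ u v : Λ, Relation.EqvGen (fun a b => Nonempty (a ⟶ b)) u v

/-- `Λ` is singly connected: at most one morphism between any two objects. -/
def SinglyConnected (Λ : Type) [SmallCategory Λ] : Prop :=
  ∀ X Y : Λ, Subsingleton (X ⟶ Y)

/-- `Λ` is simply connected: the fundamental group at each vertex, i.e. the
endomorphism monoid of each object of the localization at all morphisms, is trivial. -/
def SimplyConnected (Λ : Type) [SmallCategory Λ] : Prop :=
  ∀ v : Λ, Subsingleton (End ((⊤ : MorphismProperty Λ).Q.obj v))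

lemma eq_of_isIso_of_subsingleton_end {D : Type*} [Category D] {A B : D}
    [Subsingleton (End A)] (f g : A ⟶ B) [IsIso g] : f = g := by
  simpa using congrArg (· ≫ g) (Subsingleton.elim (α := End A) (f ≫ inv g) (𝟙 A))

lemma InjectiveOnMorphisms.map_injective {C : Type*} [Category C] {D : Type*} [Category D]
    {F : C ⥤ D} (hF : InjectiveOnMorphisms F) {X Y : C} {f g : X ⟶ Y}
    (h : F.map f = F.map g) : f = g := by
  simpa using hF (a₁ := ⟨X, Y, f⟩) (a₂ := ⟨X, Y, g⟩) (by simp [h])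

theorem singlyConnected_of_simplyConnected_general (Λ : Type) [SmallCategory Λ]
    (hinj : InjectiveOnMorphisms (⊤ : MorphismProperty Λ).Q)
    (hsimp : SimplyConnected Λ) :
    SinglyConnected Λ := by
  intro X Y
  refine ⟨fun f g => hinj.map_injective ?_⟩
  have := hsimp X
  have := Localization.inverts (⊤ : MorphismProperty Λ).Q ⊤ g trivial
  exact eq_of_isIso_of_subsingleton_end _ _

/-- a connected `k`-graph that embeds in its fundamental groupoid and is
simply connected is singly connected. -/
theorem singlyConnected_of_simplyConnected (k : ℕ) (Λ : Type) [SmallCategory Λ]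
    (S : KGraph k Λ) (hconn : IsConnectedKGraph Λ)
    (hinj : InjectiveOnMorphisms (⊤ : MorphismProperty Λ).Q)
    (hsimp : SimplyConnected Λ) :
    SinglyConnected Λ :=
  singlyConnected_of_simplyConnected_general Λ hinj hsimp
end

section
/- Let k be a natural number and let Λ be a connected k-graph. Then Λ is simply connected if and only if for every group G, every 1-cocycle c on Λ with values in G is a coboundary, i.e. there is a function b from the objects of Λ to G such that c(f) = b(X)⁻¹ · b(Y) for every morphism f : X ⟶ Y. -/
open CategoryTheory

/-- A `1`-cocycle on `Λ` with values in a group `G`. -/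
structure Cocycle (Λ : Type) [SmallCategory Λ] (G : Type) [Group G] where
  c : ∀ {X Y : Λ}, (X ⟶ Y) → G
  c_id : ∀ X : Λ, c (𝟙 X) = 1
  c_comp : ∀ {X Y Z : Λ} (f : X ⟶ Y) (g : Y ⟶ Z), c (f ≫ g) = c f * c g

/-! The localization `Π(Λ)` is a groupoid and a `G`-valued cocycle is a functor from `Λ` to the
one-object groupoid of `G`, so it factors through `Π(Λ)`. Both conditions of the theorem are
equivalent to the existence of a cone over `i : Λ ⥤ Π(Λ)`, i.e. a family of arrows `i v ⟶ i X`
compatible with every morphism of `Λ`. If the vertex group at `v` is trivial, any choice of arrows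
`i v ⟶ i X` (they exist by connectedness) is such a cone, and its image under the factored
cocycle is a coboundary. Conversely, conjugating by chosen arrows `i v ≅ i X` turns `i` into an
`Aut (i v)`-valued cocycle; a coboundary for it is a cone over `i`, and a cone over `i` extends to
a natural transformation from a constant functor to the identity of `Π(Λ)`, whose naturality
squares make every endomorphism trivial. -/

open CategoryTheory Limits

section

variable {Λ : Type} [SmallCategory Λ]

section Groupoid

variable {D : Type*} [Category.{0} D] [IsGroupoid D]

lemma IsConnectedKGraph.nonempty_hom (hconn : IsConnectedKGraph Λ) (F : Λ ⥤ D) (u w : Λ) :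
    Nonempty (F.obj u ⟶ F.obj w) := by
  induction hconn u w with
  | rel _ _ h => exact ⟨F.map h.some⟩
  | refl => exact ⟨𝟙 _⟩
  | symm _ _ _ ih => exact ⟨inv ih.some⟩
  | trans _ _ _ _ _ ih₁ ih₂ => exact ⟨ih₁.some ≫ ih₂.some⟩

lemma subsingleton_hom_of_subsingleton_end {P B : D} [Subsingleton (End P)] :
    Subsingleton (P ⟶ B) :=
  ⟨fun f₁ f₂ => by
    rw [← cancel_mono (inv f₂), IsIso.hom_inv_id]
    exact Subsingleton.elim (α := End P) _ _⟩

noncomputable def coneOfSubsingletonEnd (F : Λ ⥤ D) (P : D) [Subsingleton (End P)]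
    (h : ∀ X, Nonempty (P ⟶ F.obj X)) : Cone F where
  pt := P
  π :=
    { app := fun X => (h X).some
      naturality := fun _ _ _ =>
        @Subsingleton.elim _ (subsingleton_hom_of_subsingleton_end (P := P)) _ _ }

/-- Multiplication in `Aut P` is composition in the reverse order, hence the inverse of
`σ X ≫ F.map f ≫ (σ Y)⁻¹`. -/
noncomputable def Cocycle.ofIsos (F : Λ ⥤ D) {P : D} (σ : ∀ X, P ≅ F.obj X) :
    Cocycle Λ (Aut P) where
  c f := σ _ ≪≫ (asIso (F.map f)).symm ≪≫ (σ _).symm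
  c_id X := by ext; simp; rfl
  c_comp f g := by
    show _ = Iso.trans _ _
    ext
    simp

def Cocycle.coneOfIsosOfCoboundary (F : Λ ⥤ D) {P : D} (σ : ∀ X, P ≅ F.obj X)
    (b : Λ → Aut P) (hb : ∀ (X Y : Λ) (f : X ⟶ Y), (Cocycle.ofIsos F σ).c f = (b X)⁻¹ * b Y) :
    Cone F where
  pt := P
  π :=
    { app := fun X => (b X).inv ≫ (σ X).hom
      naturality := fun X Y f => by
        have h : (b Y).hom ≫ (b X).inv = (σ Y).hom ≫ inv (F.map f) ≫ (σ X).inv :=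
          (congrArg Iso.hom (hb X Y f)).symm
        refine (Category.id_comp _).trans ((Iso.inv_comp_eq (α := b Y)).2 ?_)
        calc (σ Y).hom = ((σ Y).hom ≫ inv (F.map f) ≫ (σ X).inv) ≫ (σ X).hom ≫ F.map f := by
              simp
          _ = (b Y).hom ≫ ((b X).inv ≫ (σ X).hom) ≫ F.map f := by
              rw [← h]; simp only [Category.assoc] }

end Groupoid

namespace Cocycle

variable {G : Type} [Group G]

/-- `SingleObj` composes as `f ≫ g = g * f`, hence the opposite group. -/
def toFunctor (c : Cocycle Λ G) : Λ ⥤ SingleObj Gᵐᵒᵖ where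
  obj _ := SingleObj.star _
  map f := MulOpposite.op (c.c f)
  map_id X := by rw [SingleObj.id_as_one, c.c_id, MulOpposite.op_one]
  map_comp f g := by rw [SingleObj.comp_as_mul, c.c_comp, MulOpposite.op_mul]

lemma exists_coboundary_of_cone (c : Cocycle Λ G) (s : Cone c.toFunctor) :
    ∃ b : Λ → G, ∀ (X Y : Λ) (f : X ⟶ Y), c.c f = (b X)⁻¹ * b Y :=
  ⟨fun X => MulOpposite.unop (s.π.app X), fun X Y f => eq_inv_mul_of_mul_eq <| by
    have h := s.w f
    rw [SingleObj.comp_as_mul] at h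
    exact congrArg MulOpposite.unop h⟩

lemma exists_coboundary_of_cone_Q (c : Cocycle Λ G) (s : Cone (⊤ : MorphismProperty Λ).Q) :
    ∃ b : Λ → G, ∀ (X Y : Λ) (f : X ⟶ Y), c.c f = (b X)⁻¹ * b Y := by
  have hc : (⊤ : MorphismProperty Λ).IsInvertedBy c.toFunctor := fun _ _ _ _ => inferInstance
  exact c.exists_coboundary_of_cone ((Cone.postcompose (Localization.fac _ hc _).hom).obj
    ((Localization.lift _ hc (⊤ : MorphismProperty Λ).Q).mapCone s))

end Cocycle

lemma subsingleton_end_of_cone_Q (s : Cone (⊤ : MorphismProperty Λ).Q)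
    (A : (⊤ : MorphismProperty Λ).Localization) : Subsingleton (End A) := by
  let τ : (Functor.const _).obj s.pt ⟶ 𝟭 _ := Localization.Construction.natTransExtension s.π
  refine ⟨fun g₁ g₂ => ?_⟩
  rw [← cancel_epi (τ.app A)]
  simpa using (τ.naturality g₁).symm.trans (τ.naturality g₂)

end

theorem simplyConnected_iff_cocycles_are_coboundaries_general (Λ : Type) [SmallCategory Λ]
    (hconn : IsConnectedKGraph Λ) :
    SimplyConnected Λ ↔
      ∀ (G : Type) [Group G] (c : Cocycle Λ G),
        ∃ b : Λ → G, ∀ (X Y : Λ) (f : X ⟶ Y), c.c f = (b X)⁻¹ * b Y := by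
  constructor
  · intro hsc G _ c
    rcases isEmpty_or_nonempty Λ with hΛ | ⟨⟨v⟩⟩
    · exact ⟨isEmptyElim, isEmptyElim⟩
    · have := hsc v
      exact c.exists_coboundary_of_cone_Q
        (coneOfSubsingletonEnd _ _ (hconn.nonempty_hom (⊤ : MorphismProperty Λ).Q v))
  · intro hcob v
    let σ X := asIso (hconn.nonempty_hom (⊤ : MorphismProperty Λ).Q v X).some
    obtain ⟨b, hb⟩ := hcob _ (Cocycle.ofIsos _ σ)
    exact subsingleton_end_of_cone_Q (Cocycle.coneOfIsosOfCoboundary _ σ b hb) _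

/-- a connected `k`-graph is simply connected if and only if every
group-valued `1`-cocycle on it is a coboundary. -/
theorem simplyConnected_iff_cocycles_are_coboundaries (k : ℕ) (Λ : Type) [SmallCategory Λ]
    (S : KGraph k Λ) (hconn : IsConnectedKGraph Λ) :
    SimplyConnected Λ ↔
      ∀ (G : Type) [Group G] (c : Cocycle Λ G),
        ∃ b : Λ → G, ∀ (X Y : Λ) (f : X ⟶ Y), c.c f = (b X)⁻¹ * b Y :=
  simplyConnected_iff_cocycles_are_coboundaries_general Λ hconn
end

section
/- Let k be a natural number, let Σ and Λ be connected k-graphs, and let p : Σ ⥤ Λ be a covering: a functor with d_Λ(p.map f) = d_Σ(f) for every morphism f, surjective on objects, and such that for every object v of Σ the induced maps from {morphisms of Σ with source v} to {morphisms of Λ with source p.obj v} and from {morphisms of Σ with target v} to {morphisms of Λ with target p.obj v} are bijections. Then the canonical localization functor i_Λ : Λ ⥤ Π(Λ) is injective on morphisms if and only if the canonical localization functor i_Σ : Σ ⥤ Π(Σ) is injective on morphisms. -/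
open CategoryTheory

/-!
A covering `p : Σ ⥤ Λ` has unique lifts of morphisms with prescribed source (and target), and
`i : C ⥤ Π(C)` is bijective on objects, so injectivity on morphisms just means that `i` is
faithful.

If `i_Λ` is faithful, so is `p ⋙ i_Λ` (lifts are unique, so `p` is faithful), and it factors
through `i_Σ`; hence `i_Σ` is faithful.

Conversely, fix `u₀` in `Σ` and transport the sets `Hom_{Π(Σ)}(u₀, x)` along lifts: the functor
`w ↦ Σ_{p x = w} Hom_{Π(Σ)}(u₀, x)` on `Λ` inverts every morphism (lifts with prescribed target
give the inverses), so it factors through `i_Λ`. If `i_Λ f = i_Λ g` with `f g` starting at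
`p u₀`, then evaluating at `𝟙 u₀` shows that the lifts of `f` and `g` from `u₀` have the same
endpoint and the same image in `Π(Σ)`; they coincide as `i_Σ` is faithful, so `f = g`.
-/

open Function

universe u v

namespace CategoryTheory

section Lifting

variable {C : Type*} [Category C] {D : Type*} [Category D] (p : C ⥤ D)

lemma star_mk_eq_mk_iff {x y : C} {w : D} (ℓ : x ⟶ y) (f : p.obj x ⟶ w) :
    p.toPrefunctor.star x (Quiver.Star.mk ℓ) = Quiver.Star.mk f ↔
      ∃ hy : p.obj y = w, p.map ℓ = f ≫ eqToHom hy.symm := by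
  rw [Prefunctor.star_apply]
  constructor
  · intro h
    obtain ⟨rfl, hℓ⟩ := Sigma.mk.inj_iff.mp h
    exact ⟨rfl, (eq_of_heq hℓ).trans (Category.comp_id f).symm⟩
  · rintro ⟨rfl, hℓ⟩
    exact congrArg Quiver.Star.mk (hℓ.trans (Category.comp_id f))

lemma costar_mk_eq_mk_iff {x y : C} {w : D} (ℓ : x ⟶ y) (f : w ⟶ p.obj y) :
    p.toPrefunctor.costar y (Quiver.Costar.mk ℓ) = Quiver.Costar.mk f ↔
      ∃ hx : p.obj x = w, p.map ℓ = eqToHom hx ≫ f := by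
  rw [Prefunctor.costar_apply]
  constructor
  · intro h
    obtain ⟨rfl, hℓ⟩ := Sigma.mk.inj_iff.mp h
    exact ⟨rfl, (eq_of_heq hℓ).trans (Category.id_comp f).symm⟩
  · rintro ⟨rfl, hℓ⟩
    exact congrArg Quiver.Costar.mk (hℓ.trans (Category.id_comp f))

lemma exists_star_lift (h : ∀ x, Surjective (p.toPrefunctor.star x)) {x : C} {w : D}
    (f : p.obj x ⟶ w) :
    ∃ (y : C) (ℓ : x ⟶ y) (hy : p.obj y = w), p.map ℓ = f ≫ eqToHom hy.symm :=
  let ⟨⟨y, ℓ⟩, hℓ⟩ := h x (Quiver.Star.mk f)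
  ⟨y, ℓ, (star_mk_eq_mk_iff p ℓ f).mp hℓ⟩

lemma exists_costar_lift (h : ∀ y, Surjective (p.toPrefunctor.costar y)) {y : C} {w : D}
    (f : w ⟶ p.obj y) :
    ∃ (x : C) (ℓ : x ⟶ y) (hx : p.obj x = w), p.map ℓ = eqToHom hx ≫ f :=
  let ⟨⟨x, ℓ⟩, hℓ⟩ := h y (Quiver.Costar.mk f)
  ⟨x, ℓ, (costar_mk_eq_mk_iff p ℓ f).mp hℓ⟩

variable {p} (hp : ∀ x, Bijective (p.toPrefunctor.star x))

noncomputable def liftStar (x : C) {w : D} (f : p.obj x ⟶ w) : Quiver.Star x :=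
  (Equiv.ofBijective _ (hp x)).symm (Quiver.Star.mk f)

lemma liftStar_eq_mk_iff {x y : C} {w : D} (f : p.obj x ⟶ w) (ℓ : x ⟶ y) :
    liftStar hp x f = Quiver.Star.mk ℓ ↔ ∃ hy : p.obj y = w, p.map ℓ = f ≫ eqToHom hy.symm :=
  (Equiv.symm_apply_eq _).trans (eq_comm.trans (star_mk_eq_mk_iff p ℓ f))

lemma obj_liftStar (x : C) {w : D} (f : p.obj x ⟶ w) : p.obj (liftStar hp x f).1 = w :=
  ((liftStar_eq_mk_iff hp f _).mp rfl).1

end Lifting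

section FiberSum

variable {C : Type u} [Category.{v} C] {D : Type*} [Category D] {p : C ⥤ D}
  (hp : ∀ x, Bijective (p.toPrefunctor.star x)) (X : C ⥤ Type u)

noncomputable def fiberSumMap {w w' : D} (f : w ⟶ w')
    (a : {a : Σ x : C, X.obj x // p.obj a.1 = w}) : {a : Σ x : C, X.obj x // p.obj a.1 = w'} :=
  ⟨⟨(liftStar hp a.1.1 (eqToHom a.2 ≫ f)).1, X.map (liftStar hp a.1.1 (eqToHom a.2 ≫ f)).2 a.1.2⟩,
    obj_liftStar hp _ _⟩

lemma fiberSumMap_eq {w w' : D} (f : w ⟶ w') {x y : C} (ℓ : x ⟶ y) (hx : p.obj x = w)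
    (hy : p.obj y = w') (hℓ : p.map ℓ = (eqToHom hx ≫ f) ≫ eqToHom hy.symm) (e : X.obj x) :
    fiberSumMap hp X f ⟨⟨x, e⟩, hx⟩ = ⟨⟨y, X.map ℓ e⟩, hy⟩ := by
  have hlift : liftStar hp x (eqToHom hx ≫ f) = Quiver.Star.mk ℓ :=
    (liftStar_eq_mk_iff hp _ _).mpr ⟨hy, hℓ⟩
  apply Subtype.ext
  unfold fiberSumMap
  dsimp only
  rw [hlift]

/-- `w ↦ ∐_{p x = w} X x`, with `f` acting through the lifts of `f`. -/
noncomputable def fiberSum : D ⥤ Type u where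
  obj w := {a : Σ x : C, X.obj x // p.obj a.1 = w}
  map f := TypeCat.ofHom (fiberSumMap hp X f)
  map_id w := by
    refine ConcreteCategory.hom_ext _ _ fun ⟨⟨x, e⟩, hx⟩ => ?_
    simp [fiberSumMap_eq hp X (𝟙 w) (𝟙 x) hx hx (by simp)]
  map_comp {w w' w''} f g := by
    refine ConcreteCategory.hom_ext _ _ fun ⟨⟨x, e⟩, hx⟩ => ?_
    obtain ⟨y, ℓ, hy, hℓ⟩ := exists_star_lift p (fun x => (hp x).2) (eqToHom hx ≫ f)
    obtain ⟨z, m, hz, hm⟩ := exists_star_lift p (fun x => (hp x).2) (eqToHom hy ≫ g)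
    simp [fiberSumMap_eq hp X f ℓ hx hy hℓ e, fiberSumMap_eq hp X g m hy hz hm,
      fiberSumMap_eq hp X (f ≫ g) (ℓ ≫ m) hx hz (by simp [hℓ, hm]) e]

lemma fiberSum_inverts (hc : ∀ y, Bijective (p.toPrefunctor.costar y))
    (hX : (⊤ : MorphismProperty C).IsInvertedBy X) :
    (⊤ : MorphismProperty D).IsInvertedBy (fiberSum hp X) := by
  intro w w' f _
  rw [isIso_iff_bijective]
  constructor
  · rintro ⟨⟨x, e⟩, hx⟩ ⟨⟨x', e'⟩, hx'⟩ h
    obtain ⟨y, ℓ, hy, hℓ⟩ := exists_star_lift p (fun x => (hp x).2) (eqToHom hx ≫ f)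
    obtain ⟨y', ℓ', hy', hℓ'⟩ := exists_star_lift p (fun x => (hp x).2) (eqToHom hx' ≫ f)
    change fiberSumMap hp X f _ = fiberSumMap hp X f _ at h
    rw [fiberSumMap_eq hp X f ℓ hx hy hℓ, fiberSumMap_eq hp X f ℓ' hx' hy' hℓ'] at h
    obtain ⟨rfl, he⟩ := Sigma.mk.inj_iff.mp (congrArg Subtype.val h)
    have hcostar : Quiver.Costar.mk ℓ = Quiver.Costar.mk ℓ' := (hc y).1 <|
      ((costar_mk_eq_mk_iff p ℓ (f ≫ eqToHom hy.symm)).mpr ⟨hx, by simp [hℓ]⟩).trans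
        ((costar_mk_eq_mk_iff p ℓ' _).mpr ⟨hx', by simp [hℓ']⟩).symm
    obtain ⟨rfl, hℓℓ'⟩ := Sigma.mk.inj_iff.mp hcostar
    cases eq_of_heq hℓℓ'
    have hiso : IsIso (X.map ℓ) := hX ℓ trivial
    exact Subtype.ext (Sigma.ext rfl
      (heq_of_eq (((isIso_iff_bijective _).mp hiso).1 (eq_of_heq he))))
  · rintro ⟨⟨y, e⟩, hy⟩
    obtain ⟨x, ℓ, hx, hℓ⟩ := exists_costar_lift p (fun y => (hc y).2) (f ≫ eqToHom hy.symm)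
    have : IsIso (X.map ℓ) := hX ℓ trivial
    refine ⟨⟨⟨x, inv (X.map ℓ) e⟩, hx⟩, ?_⟩
    change fiberSumMap hp X f _ = _
    rw [fiberSumMap_eq hp X f ℓ hx hy (by rw [hℓ, Category.assoc])]
    simp

end FiberSum

namespace MorphismProperty

variable {C : Type*} [Category C] {E : Type*} [Category E] {W : MorphismProperty C}
  {F : C ⥤ E}

lemma Q_obj_injective : Function.Injective W.Q.obj :=
  fun _ _ h => congrArg (fun T : W.Localization => T.as.obj) h

lemma map_eq_of_Q_map_eq (hF : W.IsInvertedBy F) {x y : C} {f g : x ⟶ y}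
    (h : W.Q.map f = W.Q.map g) : F.map f = F.map g := by
  rw [← Localization.Construction.fac F hF, Functor.comp_map, Functor.comp_map, h]

lemma faithful_Q_of_isInvertedBy (hF : W.IsInvertedBy F) [F.Faithful] : W.Q.Faithful :=
  Functor.Faithful.of_comp_eq (Localization.Construction.fac F hF)

end MorphismProperty

lemma injectiveOnMorphisms_iff_faithful {C : Type*} [Category C] {E : Type*} [Category E]
    {F : C ⥤ E} (hobj : Function.Injective F.obj) : InjectiveOnMorphisms F ↔ F.Faithful := by
  constructor
  · refine fun hF => ⟨fun {x y} f g h => ?_⟩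
    have hxyf := @hF ⟨x, y, f⟩ ⟨x, y, g⟩ (by simp only [h])
    simpa using hxyf
  · rintro hF ⟨x, y, f⟩ ⟨x', y', g⟩ h
    obtain ⟨hx, h⟩ := Sigma.mk.inj_iff.mp h
    cases hobj hx
    obtain ⟨hy, h⟩ := Sigma.mk.inj_iff.mp (eq_of_heq h)
    cases hobj hy
    cases F.map_injective (eq_of_heq h)
    rfl

lemma injectiveOnMorphisms_Q_iff {C : Type*} [Category C] (W : MorphismProperty C) :
    InjectiveOnMorphisms W.Q ↔ W.Q.Faithful :=
  injectiveOnMorphisms_iff_faithful MorphismProperty.Q_obj_injective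

lemma faithful_Q_of_faithful {C : Type*} [Category C] {D : Type*} [Category D] (p : C ⥤ D)
    [p.Faithful] [(⊤ : MorphismProperty D).Q.Faithful] : (⊤ : MorphismProperty C).Q.Faithful :=
  MorphismProperty.faithful_Q_of_isInvertedBy (F := p ⋙ (⊤ : MorphismProperty D).Q)
    fun _ _ f _ => (⊤ : MorphismProperty D).Q_inverts (p.map f) trivial

lemma faithful_Q_of_isCovering {C : Type u} [SmallCategory C] {D : Type*} [Category D]
    {p : C ⥤ D} (hp : p.toPrefunctor.IsCovering) (hsurj : Surjective p.obj)
    [(⊤ : MorphismProperty C).Q.Faithful] : (⊤ : MorphismProperty D).Q.Faithful := by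
  refine ⟨fun {w v} f g hfg => ?_⟩
  obtain ⟨u₀, rfl⟩ := hsurj w
  let Q := (⊤ : MorphismProperty C).Q
  have hX : (⊤ : MorphismProperty C).IsInvertedBy (Q ⋙ coyoneda.obj (Opposite.op (Q.obj u₀))) :=
    MorphismProperty.IsInvertedBy.of_comp _ _ (⊤ : MorphismProperty C).Q_inverts _
  have hF := MorphismProperty.map_eq_of_Q_map_eq
    (fiberSum_inverts hp.star_bijective _ hp.costar_bijective hX) hfg
  obtain ⟨y, ℓ, hy, hℓ⟩ := exists_star_lift p (fun x => (hp.star_bijective x).2) f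
  obtain ⟨y', ℓ', hy', hℓ'⟩ := exists_star_lift p (fun x => (hp.star_bijective x).2) g
  have h := ConcreteCategory.congr_hom hF ⟨⟨u₀, 𝟙 (Q.obj u₀)⟩, rfl⟩
  change fiberSumMap _ _ f _ = fiberSumMap _ _ g _ at h
  rw [fiberSumMap_eq _ _ f ℓ rfl hy (by simpa using hℓ),
    fiberSumMap_eq _ _ g ℓ' rfl hy' (by simpa using hℓ')] at h
  obtain ⟨rfl, hQ⟩ := Sigma.mk.inj_iff.mp (congrArg Subtype.val h)
  cases Q.map_injective (by simpa using eq_of_heq hQ : Q.map ℓ = Q.map ℓ')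
  exact (cancel_mono _).mp (hℓ.symm.trans hℓ')

end CategoryTheory

theorem covering_embeds_iff_general (Sig Lam : Type) [SmallCategory Sig] [SmallCategory Lam]
    (p : Sig ⥤ Lam)
    (hsurj : Function.Surjective p.obj)
    (hsource : ∀ v : Sig, Function.Bijective
      (fun t : Σ Y : Sig, (v ⟶ Y) => (⟨p.obj t.1, p.map t.2⟩ : Σ Y : Lam, (p.obj v ⟶ Y))))
    (htarget : ∀ v : Sig, Function.Bijective
      (fun t : Σ X : Sig, (X ⟶ v) => (⟨p.obj t.1, p.map t.2⟩ : Σ X : Lam, (X ⟶ p.obj v)))) :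
    InjectiveOnMorphisms (⊤ : MorphismProperty Lam).Q ↔
      InjectiveOnMorphisms (⊤ : MorphismProperty Sig).Q := by
  have hp : p.toPrefunctor.IsCovering := ⟨hsource, htarget⟩
  have : p.Faithful := ⟨fun h => hp.map_injective _ h⟩
  rw [injectiveOnMorphisms_Q_iff, injectiveOnMorphisms_Q_iff]
  exact ⟨fun _ => faithful_Q_of_faithful p, fun _ => faithful_Q_of_isCovering hp hsurj⟩

/-- for a covering `p : Σ ⥤ Λ` of connected `k`-graphs, `Λ` embeds in its
fundamental groupoid if and only if `Σ` embeds in its fundamental groupoid. -/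
theorem covering_embeds_iff (k : ℕ) (Sig Lam : Type) [SmallCategory Sig] [SmallCategory Lam]
    (SS : KGraph k Sig) (SL : KGraph k Lam)
    (hconnS : IsConnectedKGraph Sig) (hconnL : IsConnectedKGraph Lam)
    (p : Sig ⥤ Lam)
    (hdeg : ∀ {X Y : Sig} (f : X ⟶ Y), SL.d (p.map f) = SS.d f)
    (hsurj : Function.Surjective p.obj)
    (hsource : ∀ v : Sig, Function.Bijective
      (fun t : Σ Y : Sig, (v ⟶ Y) => (⟨p.obj t.1, p.map t.2⟩ : Σ Y : Lam, (p.obj v ⟶ Y))))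
    (htarget : ∀ v : Sig, Function.Bijective
      (fun t : Σ X : Sig, (X ⟶ v) => (⟨p.obj t.1, p.map t.2⟩ : Σ X : Lam, (X ⟶ p.obj v)))) :
    InjectiveOnMorphisms (⊤ : MorphismProperty Lam).Q ↔
      InjectiveOnMorphisms (⊤ : MorphismProperty Sig).Q :=
  covering_embeds_iff_general Sig Lam p hsurj hsource htarget
end

section
/- Let E be a quiver and let Λ = Paths E be its path category (the free category on E). Then the canonical localization functor i : Λ ⥤ Π(Λ), from Λ to its localization at all morphisms, is injective on morphisms. -/
/-!
Sending an arrow `e` of `E` to the generator `e` of the free group on the arrows of `E` defines a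
functor from `Paths E` to a one-object groupoid. It is faithful because the word of a path uses
no inverse letters, so it is already reduced and is recovered from its image. Any functor that
inverts every morphism factors through the localization, so the localization functor is
faithful as well; it is the identity on objects.
-/

open CategoryTheory

theorem injectiveOnMorphisms_of_faithful {C : Type*} [Category C] {D : Type*} [Category D]
    {F : C ⥤ D} (hobj : Function.Injective F.obj) [F.Faithful] : InjectiveOnMorphisms F := by
  rintro ⟨X, Y, f⟩ ⟨X', Y', g⟩ h
  obtain ⟨hX, h⟩ := Sigma.mk.inj_iff.mp h
  obtain rfl := hobj hX
  obtain ⟨hY, h⟩ := Sigma.mk.inj_iff.mp (eq_of_heq h)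
  obtain rfl := hobj hY
  obtain rfl := F.map_injective (eq_of_heq h)
  rfl

namespace FreeGroup

variable {α : Type*}

theorem isReduced_map_true (L : List α) : IsReduced (L.map fun a => (a, true)) :=
  (List.isChain_map _).mpr (List.pairwise_of_forall fun _ _ _ => rfl).isChain

theorem mk_map_true_injective :
    Function.Injective fun L : List α => mk (L.map fun a => (a, true)) := by
  classical
  intro L L' h
  have hword := congrArg toWord h
  simp only [toWord_mk, (isReduced_map_true _).reduce_eq] at hword
  exact List.map_injective_iff.mpr (fun _ _ h => (Prod.mk.inj h).1) hword

end FreeGroup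

namespace Quiver.Path

variable {V : Type*} [Quiver V]

def arrows : ∀ {a b : V}, Path a b → List (Σ X Y : V, X ⟶ Y)
  | _, _, nil => []
  | _, _, cons p e => ⟨_, _, e⟩ :: p.arrows

theorem arrows_comp {a b : V} (p : Path a b) : ∀ {c : V} (q : Path b c),
    (p.comp q).arrows = q.arrows ++ p.arrows
  | _, nil => by simp [arrows]
  | _, cons q e => by simp [arrows, arrows_comp p q]

theorem arrows_injective : ∀ {a b : V} {p q : Path a b}, p.arrows = q.arrows → p = q
  | _, _, nil, nil, _ => rfl
  | _, _, nil, cons _ _, h => by simp [arrows] at h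
  | _, _, cons _ _, nil, h => by simp [arrows] at h
  | _, _, cons p e, cons q f, h => by
      simp only [arrows, List.cons_eq_cons] at h
      obtain ⟨hhead, htail⟩ := h
      obtain ⟨rfl, hhead⟩ := Sigma.mk.inj_iff.mp hhead
      obtain ⟨-, hhead⟩ := Sigma.mk.inj_iff.mp (eq_of_heq hhead)
      obtain rfl := eq_of_heq hhead
      rw [arrows_injective htail]

end Quiver.Path

namespace CategoryTheory.Paths

variable (V : Type*) [Quiver V]

def toFreeGroup : Paths V ⥤ SingleObj (FreeGroup (Σ X Y : V, X ⟶ Y)) :=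
  lift { obj := fun _ => SingleObj.star _, map := fun e => FreeGroup.of ⟨_, _, e⟩ }

theorem toFreeGroup_map : ∀ {a b : V} (p : Quiver.Path a b),
    (toFreeGroup V).map p = FreeGroup.mk (p.arrows.map fun a => (a, true))
  | _, _, .nil => by
    rw [toFreeGroup, lift_nil, SingleObj.id_as_one, Quiver.Path.arrows, List.map_nil,
      FreeGroup.one_eq_mk]
  | _, _, .cons p e => by
    rw [toFreeGroup, lift_cons, ← toFreeGroup, toFreeGroup_map p, SingleObj.comp_as_mul]
    simp only [Quiver.Path.arrows, List.map_cons]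
    exact FreeGroup.mul_mk

instance : (toFreeGroup V).Faithful where
  map_injective {_ _} p q h := Quiver.Path.arrows_injective <| FreeGroup.mk_map_true_injective <|
    (toFreeGroup_map V p).symm.trans (h.trans (toFreeGroup_map V q))

end CategoryTheory.Paths

/-- the path category of any quiver (i.e. any `1`-graph) embeds in its
fundamental groupoid, the localization at all morphisms. -/
theorem paths_embeds (E : Type*) [Quiver E] :
    InjectiveOnMorphisms (⊤ : MorphismProperty (Paths E)).Q := by
  have : (⊤ : MorphismProperty (Paths E)).Q.Faithful :=
    Functor.Faithful.of_comp_eq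
      (Localization.Construction.fac (Paths.toFreeGroup E) fun _ _ _ _ => inferInstance)
  exact injectiveOnMorphisms_of_faithful (Localization.Construction.objEquiv _).injective
end

section
/- Let k, ℓ be natural numbers, let Λ be a k-graph and Γ an ℓ-graph. Suppose the canonical localization functors i_Λ : Λ ⥤ Π(Λ) and i_Γ : Γ ⥤ Π(Γ) are both injective on morphisms. Then the canonical localization functor of the product category Λ × Γ (a (k+ℓ)-graph with degree map d(f, g) = (d_Λ(f), d_Γ(g))) at all morphisms is injective on morphisms. -/
open CategoryTheory

/-!
The functor `i_Λ × i_Γ` inverts every morphism of `Λ × Γ`, so by the universal property of the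
localization it factors through `i : Λ × Γ ⥤ Π(Λ × Γ)`. The product functor is injective on
morphisms because `i_Λ` and `i_Γ` are, and a functor through which an injective one factors is
itself injective.
-/

namespace CategoryTheory

def sigmaHomProdEquiv (C C' : Type*) [Category C] [Category C'] :
    (Σ X Y : C × C', X ⟶ Y) ≃ (Σ X Y : C, X ⟶ Y) × (Σ X Y : C', X ⟶ Y) where
  toFun t := (⟨t.1.1, t.2.1.1, t.2.2.1⟩, ⟨t.1.2, t.2.1.2, t.2.2.2⟩)
  invFun p := ⟨(p.1.1, p.2.1), (p.1.2.1, p.2.2.1), (p.1.2.2, p.2.2.2)⟩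
  left_inv _ := rfl
  right_inv _ := rfl

namespace InjectiveOnMorphisms

variable {C C' D D' E : Type*} [Category C] [Category C'] [Category D] [Category D'] [Category E]

theorem of_comp {F : C ⥤ D} {G : D ⥤ E} (h : InjectiveOnMorphisms (F ⋙ G)) :
    InjectiveOnMorphisms F :=
  Function.Injective.of_comp
    (f := fun t : Σ X Y : D, X ⟶ Y => (⟨G.obj t.1, G.obj t.2.1, G.map t.2.2⟩ : Σ X Y : E, X ⟶ Y)) h

theorem prod {F : C ⥤ D} {G : C' ⥤ D'} (hF : InjectiveOnMorphisms F)
    (hG : InjectiveOnMorphisms G) : InjectiveOnMorphisms (F.prod G) :=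
  (sigmaHomProdEquiv D D').symm.injective.comp
    ((hF.prodMap hG).comp (sigmaHomProdEquiv C C').injective)

end InjectiveOnMorphisms

theorem MorphismProperty.injectiveOnMorphisms_Q_of_isInvertedBy {C D : Type*} [Category C]
    [Category D] {W : MorphismProperty C} {F : C ⥤ D} (hW : W.IsInvertedBy F)
    (hF : InjectiveOnMorphisms F) : InjectiveOnMorphisms W.Q := by
  rw [← Localization.Construction.fac F hW] at hF
  exact hF.of_comp

end CategoryTheory

theorem product_embeds_general (Lam Gam : Type) [SmallCategory Lam] [SmallCategory Gam]
    (hL : InjectiveOnMorphisms (⊤ : MorphismProperty Lam).Q)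
    (hG : InjectiveOnMorphisms (⊤ : MorphismProperty Gam).Q) :
    InjectiveOnMorphisms (⊤ : MorphismProperty (Lam × Gam)).Q := by
  have hinverts : (⊤ : MorphismProperty (Lam × Gam)).IsInvertedBy
      ((⊤ : MorphismProperty Lam).Q.prod (⊤ : MorphismProperty Gam).Q) := fun _ _ f _ =>
    (MorphismProperty.Q_inverts _).prod (MorphismProperty.Q_inverts _) f ⟨trivial, trivial⟩
  exact MorphismProperty.injectiveOnMorphisms_Q_of_isInvertedBy hinverts (hL.prod hG)

/-- if a `k`-graph `Λ` and an `ℓ`-graph `Γ` both embed in their fundamental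
groupoids, then so does the product category `Λ × Γ` (which is a `(k+ℓ)`-graph with
degree map `d (f, g) = (d_Λ f, d_Γ g)`). -/
theorem product_embeds (k l : ℕ) (Lam Gam : Type) [SmallCategory Lam] [SmallCategory Gam]
    (SL : KGraph k Lam) (SG : KGraph l Gam)
    (hL : InjectiveOnMorphisms (⊤ : MorphismProperty Lam).Q)
    (hG : InjectiveOnMorphisms (⊤ : MorphismProperty Gam).Q) :
    InjectiveOnMorphisms (⊤ : MorphismProperty (Lam × Gam)).Q :=
  product_embeds_general Lam Gam hL hG
end

section
/- Let k be a natural number and let Γ be a singly connected k-graph. If x and y are infinite paths in Γ with x(0) = y(0), and p, q ∈ ℕ^k satisfy σ^p x = σ^q y, then p = q and x = y. -/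
open CategoryTheory

/-- An infinite path in a `k`-graph `Γ`: a (degree-preserving) functor from the opposite
of the poset category `(Fin k → ℕ, ≤)` to `Γ`, given concretely by its action `vertex`
on objects and `edge` on morphisms.  The morphism assigned to a pair `m ≤ n` goes
`vertex n ⟶ vertex m` and has degree `n - m`. -/
structure InfPath {k : ℕ} {Γ : Type} [SmallCategory Γ] (S : KGraph k Γ) where
  vertex : (Fin k → ℕ) → Γ
  edge : ∀ m n : Fin k → ℕ, m ≤ n → (vertex n ⟶ vertex m)
  edge_refl : ∀ n, edge n n le_rfl = 𝟙 (vertex n)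
  edge_comp : ∀ (m n p : Fin k → ℕ) (h₁ : m ≤ n) (h₂ : n ≤ p),
    edge m p (h₁.trans h₂) = edge n p h₂ ≫ edge m n h₁
  deg : ∀ (m n : Fin k → ℕ) (h : m ≤ n), S.d (edge m n h) = n - m

namespace InfPath

variable {k : ℕ} {Γ : Type} [SmallCategory Γ] {S : KGraph k Γ}

/-- The shift `σ^p x` of an infinite path `x`: precomposition with translation by `p`. -/
def shift (p : Fin k → ℕ) (x : InfPath S) : InfPath S where
  vertex n := x.vertex (n + p)
  edge m n h := x.edge (m + p) (n + p) (add_le_add_left h p)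
  edge_refl n := x.edge_refl (n + p)
  edge_comp m n q h₁ h₂ := x.edge_comp (m + p) (n + p) (q + p) _ _
  deg m n h := by
    rw [x.deg]
    funext i
    simp [Nat.add_sub_add_right]

end InfPath

/-!
Since `σ^p x = σ^q y`, the paths `x` and `y` pass through a common vertex `x(p) = y(q)`, and in a
singly connected graph the morphisms `x(p) ⟶ x(0)` and `y(q) ⟶ y(0)` coincide; comparing
degrees gives `p = q`. Then `x` and `y` agree at `0` and at every `n + p`, and the unique
factorisation of the single morphism `x(n + p) ⟶ x(0)` into degrees `p` and `n` forces
`x(n) = y(n)`. A path in a singly connected graph is determined by its vertices.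
-/

namespace KGraph

variable {k : ℕ} {Γ : Type} [SmallCategory Γ] (S : KGraph k Γ)

lemma d_eqToHom {A B : Γ} (e : A = B) : S.d (eqToHom e) = 0 := by
  subst e
  exact S.d_id A

lemma d_eq_of_subsingleton (hsc : ∀ X Y : Γ, Subsingleton (X ⟶ Y))
    {A B A' B' : Γ} (f : A ⟶ B) (g : A' ⟶ B') (hA : A = A') (hB : B = B') :
    S.d f = S.d g := by
  subst hA hB
  exact congrArg S.d ((hsc _ _).elim f g)

lemma obj_eq_of_comp_eq {X Y₁ Y₂ Z : Γ} (g₁ : X ⟶ Y₁) (h₁ : Y₁ ⟶ Z) (g₂ : X ⟶ Y₂)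
    (h₂ : Y₂ ⟶ Z) (hg : S.d g₁ = S.d g₂) (hh : S.d h₁ = S.d h₂) (w : g₁ ≫ h₁ = g₂ ≫ h₂) :
    Y₁ = Y₂ :=
  congrArg Sigma.fst <| (S.factorisation (g₁ ≫ h₁) (S.d g₁) (S.d h₁) (S.d_comp g₁ h₁)).unique
    (y₁ := ⟨Y₁, g₁, h₁⟩) ⟨rfl, rfl, rfl⟩ (y₂ := ⟨Y₂, g₂, h₂⟩) ⟨hg.symm, hh.symm, w.symm⟩

end KGraph

namespace InfPath

variable {k : ℕ} {Γ : Type} [SmallCategory Γ] {S : KGraph k Γ}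

lemma ext_of_vertex (hsc : ∀ X Y : Γ, Subsingleton (X ⟶ Y)) {x y : InfPath S}
    (hv : x.vertex = y.vertex) : x = y := by
  cases x
  cases y
  subst hv
  congr 1
  funext m n hmn
  exact (hsc _ _).elim _ _

lemma vertex_eq_of_le_of_le (hsc : ∀ X Y : Γ, Subsingleton (X ⟶ Y)) {x y : InfPath S}
    {l m n : Fin k → ℕ} (hl : x.vertex l = y.vertex l) (hn : x.vertex n = y.vertex n)
    (hlm : l ≤ m) (hmn : m ≤ n) : x.vertex m = y.vertex m :=
  S.obj_eq_of_comp_eq (x.edge m n hmn) (x.edge l m hlm)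
    (eqToHom hn ≫ y.edge m n hmn) (y.edge l m hlm ≫ eqToHom hl.symm)
    (by rw [S.d_comp, S.d_eqToHom, x.deg, y.deg, zero_add])
    (by rw [S.d_comp, S.d_eqToHom, x.deg, y.deg, add_zero])
    ((hsc _ _).elim _ _)

end InfPath

/-- in a singly connected `k`-graph, if two infinite paths start at the
same vertex and have a common shift, then they are equal and the shifts agree. -/
theorem eq_of_shift_eq_of_singlyConnected (k : ℕ) (Γ : Type) [SmallCategory Γ]
    (S : KGraph k Γ) (hsc : ∀ X Y : Γ, Subsingleton (X ⟶ Y))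
    (x y : InfPath S) (h0 : x.vertex 0 = y.vertex 0)
    (p q : Fin k → ℕ) (h : x.shift p = y.shift q) :
    p = q ∧ x = y := by
  have hv (n : Fin k → ℕ) : x.vertex (n + p) = y.vertex (n + q) :=
    congrArg (InfPath.vertex · n) h
  have hpq : p = q := by
    have hd := S.d_eq_of_subsingleton hsc (x.edge 0 p zero_le) (y.edge 0 q zero_le)
      (by simpa using hv 0) h0
    simpa [x.deg, y.deg] using hd
  subst hpq
  exact ⟨rfl, InfPath.ext_of_vertex hsc <| funext fun n =>
    InfPath.vertex_eq_of_le_of_le hsc h0 (hv n) zero_le le_self_add⟩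
end

section
/- Let Γ_𝒯 be the A₂-tilde group of a finite projective plane (P, L) with bijection σ : P ≃ L and compatible triella 𝒯. For every w ∈ Γ_𝒯: (1) there exists a unique pair of lists (xs, ys) over P forming a right normal form of w; (2) there exists a unique pair of lists (ts, ss) over P with w = a_{t₁}⁻¹⋯a_{t_n}⁻¹·a_{s₁}⋯a_{s_m}, s_{i+1} ∉ σ(s_i) for consecutive entries of ss, t_j ∉ σ(t_{j+1}) for consecutive entries of ts, and the last entry of ts distinct from the first entry of ss when both lists are nonempty (the left normal form); moreover ss has the same length m as xs and ts has the same length n as ys; (3) every list l of letters from {a_x, a_x⁻¹ : x ∈ P} whose product is w has length at least m + n, and if its length equals m + n then it contains exactly m generator letters and n inverse letters. -/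
/-- The relations of the A₂-tilde group: `a_x a_y a_z = 1` for `(x, y, z) ∈ T`. -/
def A2Rels {P : Type} (T : Set (P × P × P)) : Set (FreeGroup P) :=
  (fun t : P × P × P => FreeGroup.of t.1 * FreeGroup.of t.2.1 * FreeGroup.of t.2.2) '' T

/-- The A₂-tilde group associated to a triella `T`. -/
abbrev A2TildeGroup {P : Type} (T : Set (P × P × P)) : Type := PresentedGroup (A2Rels T)

/-- The generator `a_x` of the A₂-tilde group. -/
def a {P : Type} (T : Set (P × P × P)) (x : P) : A2TildeGroup T := PresentedGroup.of x

/-- `(xs, ys)` is a right normal form of `w`: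
`w = a_{x₁} ⋯ a_{x_m} · a_{y₁}⁻¹ ⋯ a_{y_n}⁻¹` with `x_{i+1} ∉ σ x_i`, `y_j ∉ σ y_{j+1}`,
and `x_m ≠ y₁` when both lists are nonempty. -/
def IsRNF {P L : Type} [Membership P L] (σ : P ≃ L) (T : Set (P × P × P))
    (w : A2TildeGroup T) (xs ys : List P) : Prop :=
  w = (xs.map fun x => a T x).prod * (ys.map fun y => (a T y)⁻¹).prod ∧
  List.Chain' (fun p q => q ∉ σ p) xs ∧
  List.Chain' (fun p q => p ∉ σ q) ys ∧
  (∀ x ∈ xs.getLast?, ∀ y ∈ ys.head?, x ≠ y)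

/-- `(ts, ss)` is a left normal form of `w`:
`w = a_{t₁}⁻¹ ⋯ a_{t_n}⁻¹ · a_{s₁} ⋯ a_{s_m}` with `s_{i+1} ∉ σ s_i`, `t_j ∉ σ t_{j+1}`,
and the last entry of `ts` distinct from the first entry of `ss` when both are
nonempty. -/
def IsLNF {P L : Type} [Membership P L] (σ : P ≃ L) (T : Set (P × P × P))
    (w : A2TildeGroup T) (ts ss : List P) : Prop :=
  w = (ts.map fun t => (a T t)⁻¹).prod * (ss.map fun s => a T s).prod ∧
  List.Chain' (fun p q => q ∉ σ p) ss ∧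
  List.Chain' (fun p q => p ∉ σ q) ts ∧
  (∀ t ∈ ts.getLast?, ∀ s ∈ ss.head?, t ≠ s)

/-- The evaluation of a letter: `(x, true)` is the generator `a_x` and `(x, false)` its
inverse. -/
def letterEval {P : Type} (T : Set (P × P × P)) (pb : P × Bool) : A2TildeGroup T :=
  if pb.2 then a T pb.1 else (a T pb.1)⁻¹

/-!
Orient the relations of `Γ_𝒯` into a rewriting system on words in the letters `a_x^{±1}`:
cancel `a_x a_x⁻¹` and `a_x⁻¹ a_x`, rewrite `a_x a_y ↦ a_z⁻¹` and `a_x⁻¹ a_y⁻¹ ↦ a_z` along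
triples of `𝒯`, and rewrite `a_p⁻¹ a_x ↦ a_u a_w⁻¹` (`p ≠ x`) through the line joining `p`
and `x`. Each rule shortens a word, or keeps its length and removes an inversion (a negative
letter before a positive one), so rewriting terminates. The critical pairs resolve, and the
uniqueness of the joining line makes the last rule deterministic, so by Newman's lemma every
word reduces to a unique irreducible word; these are exactly the right normal forms. Words equal
in `Γ_𝒯` are equivalent under rewriting, because `Γ_𝒯` maps to the units of the monoid of words
modulo rewriting. Rewriting never lengthens a word and length-preserving steps only permute the
signs, which gives minimality and the letter counts. Reversing words turns left normal forms of
`w` into right normal forms for the reversed triella `{(z, y, x) | (x, y, z) ∈ 𝒯}` (with respect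
to the dual plane), through the anti-isomorphism `a_x ↦ a_x`; both normal forms of `w` are then
shortest representatives, so their letter counts agree.
-/

open Relation Configuration

namespace Relation

variable {α : Type*} {r : α → α → Prop}

theorem church_rosser_of_wellFounded (hwf : WellFounded (flip r))
    (hlc : ∀ a b c, r a b → r a c → Join (ReflTransGen r) b c) {a b c : α}
    (hab : ReflTransGen r a b) (hac : ReflTransGen r a c) : Join (ReflTransGen r) b c := by
  induction a using hwf.induction generalizing b c with
  | _ a ih =>
  rcases hab.cases_head with rfl | ⟨b₁, hab₁, hb₁b⟩
  · exact ⟨c, hac, .refl⟩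
  rcases hac.cases_head with rfl | ⟨c₁, hac₁, hc₁c⟩
  · exact ⟨b, .refl, hab⟩
  obtain ⟨d, hb₁d, hc₁d⟩ := hlc a b₁ c₁ hab₁ hac₁
  obtain ⟨e, hbe, hde⟩ := ih b₁ hab₁ hb₁b hb₁d
  obtain ⟨f, hcf, hef⟩ := ih c₁ hac₁ hc₁c (hc₁d.trans hde)
  exact ⟨f, hbe.trans hef, hcf⟩

theorem join_of_eqvGen
    (hcr : ∀ a b c, ReflTransGen r a b → ReflTransGen r a c → Join (ReflTransGen r) b c)
    {a b : α} (h : EqvGen r a b) : Join (ReflTransGen r) a b :=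
  (equivalence_join hcr).eqvGen_iff.mp (h.mono fun _ b hab => ⟨b, .single hab, .refl⟩)

theorem exists_reflTransGen_forall_not (hwf : WellFounded (flip r)) (a : α) :
    ∃ b, ReflTransGen r a b ∧ ∀ c, ¬ r b c := by
  obtain ⟨b, hab, hmin⟩ := hwf.has_min {b | ReflTransGen r a b} ⟨a, .refl⟩
  exact ⟨b, hab, fun c hbc => hmin c (hab.tail hbc) hbc⟩

theorem ReflTransGen.eq_of_forall_not {a b : α} (ha : ∀ c, ¬ r a c)
    (hab : ReflTransGen r a b) : b = a :=
  (hab.cases_head.resolve_right fun ⟨c, hac, _⟩ => ha c hac).symm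

end Relation

theorem List.append_cons_cons_eq_append_cons_cons {X : Type*} {c₁ c₂ d₁ d₂ : List X}
    {a b a' b' : X} (h : c₁ ++ a :: b :: c₂ = d₁ ++ a' :: b' :: d₂) :
    (c₁ = d₁ ∧ a = a' ∧ b = b' ∧ c₂ = d₂) ∨
    (∃ m, d₁ = c₁ ++ a :: b :: m ∧ c₂ = m ++ a' :: b' :: d₂) ∨
    (∃ m, c₁ = d₁ ++ a' :: b' :: m ∧ d₂ = m ++ a :: b :: c₂) ∨
    (d₁ = c₁ ++ [a] ∧ a' = b ∧ c₂ = b' :: d₂) ∨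
    (c₁ = d₁ ++ [a'] ∧ a = b' ∧ d₂ = b :: c₂) := by
  rcases List.append_eq_append_iff.1 h with ⟨k, rfl, hk⟩ | ⟨k, rfl, hk⟩ <;>
    rcases k with _ | ⟨e, _ | ⟨f, m⟩⟩ <;>
    simp only [List.nil_append, List.cons_append, List.cons.injEq] at hk <;> grind

namespace Configuration.ProjectivePlane

variable {P L : Type*} [Membership P L] [ProjectivePlane P L]

theorem exists_mem_and_mem (p q : P) : ∃ l : L, p ∈ l ∧ q ∈ l := by
  have line : ∀ {p q : P}, p ≠ q → ∃ l : L, p ∈ l ∧ q ∈ l :=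
    fun h => ⟨HasLines.mkLine h, HasLines.mkLine_ax h⟩
  rcases ne_or_eq p q with hpq | rfl
  · exact line hpq
  obtain ⟨p₁, p₂, -, -, l₂, -, hp₁, -, -, hp₂, -⟩ := exists_config (P := P) (L := L)
  have hp₁₂ : p₁ ≠ p₂ := fun h => hp₁ (h ▸ hp₂)
  obtain ⟨r, hr⟩ : ∃ r, p ≠ r :=
    (eq_or_ne p p₁).elim (fun h => ⟨p₂, h ▸ hp₁₂⟩) fun h => ⟨p₁, h⟩
  obtain ⟨l, hl, -⟩ := line hr
  exact ⟨l, hl, hl⟩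

end Configuration.ProjectivePlane

namespace A2Tilde

section Triella

variable {P : Type*} (T : Set (P × P × P))

def Adj (x y : P) : Prop := ∃ z, (x, y, z) ∈ T

def rev : Set (P × P × P) := {t | (t.2.2, t.2.1, t.1) ∈ T}

structure IsTriella : Prop where
  rotate : ∀ {x y z : P}, (x, y, z) ∈ T → (y, z, x) ∈ T
  functional : ∀ {x y z z' : P}, (x, y, z) ∈ T → (x, y, z') ∈ T → z = z'

/-- Reading `Adj T v p` as "`p` lies on the line `σ v`": any two points lie on a common line,
and two distinct points on only one. -/
structure IsPlanarTriella : Prop extends IsTriella T where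
  exists_adj_adj : ∀ p q : P, ∃ v, Adj T v p ∧ Adj T v q
  eq_of_adj_adj : ∀ {p q v v' : P}, p ≠ q → Adj T v p → Adj T v q → Adj T v' p → Adj T v' q →
    v = v'

variable {T}

namespace IsTriella

variable (hT : IsTriella T)
include hT

theorem rotate₂ {x y z : P} (h : (x, y, z) ∈ T) : (z, x, y) ∈ T := hT.rotate (hT.rotate h)

theorem functional_fst {x x' y z : P} (h : (x, y, z) ∈ T) (h' : (x', y, z) ∈ T) : x = x' :=
  hT.functional (hT.rotate h) (hT.rotate h')

theorem functional_snd {x y y' z : P} (h : (x, y, z) ∈ T) (h' : (x, y', z) ∈ T) : y = y' :=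
  hT.functional (hT.rotate₂ h) (hT.rotate₂ h')

protected theorem rev : IsTriella (rev T) where
  rotate h := hT.rotate₂ h
  functional h h' := hT.functional_fst h h'

theorem adj_rev_iff {x y : P} : Adj (rev T) x y ↔ Adj T y x :=
  ⟨fun ⟨z, h⟩ => ⟨z, hT.rotate h⟩, fun ⟨z, h⟩ => ⟨z, hT.rotate₂ h⟩⟩

theorem isPlanarTriella_of_incidence {P' L' : Type*} [Membership P' L']
    [ProjectivePlane P' L'] (f : P ≃ P') (g : P ≃ L') (hadj : ∀ v p, Adj T v p ↔ f p ∈ g v) :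
    IsPlanarTriella T where
  toIsTriella := hT
  exists_adj_adj p q := by
    obtain ⟨l, hp, hq⟩ := ProjectivePlane.exists_mem_and_mem (L := L') (f p) (f q)
    exact ⟨g.symm l, (hadj _ _).2 (by simpa using hp), (hadj _ _).2 (by simpa using hq)⟩
  eq_of_adj_adj hpq h₁ h₂ h₃ h₄ := by
    rw [hadj] at h₁ h₂ h₃ h₄
    exact g.injective ((Nondegenerate.eq_or_eq h₁ h₂ h₃ h₄).resolve_left (f.injective.ne hpq))

end IsTriella

end Triella

section Rewriting

variable {P : Type*}

abbrev Word (P : Type*) := List (P × Bool)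

/-- In `neg_pos`, `σ v` is the line through `p` and `x`, and the rule rewrites
`a_p⁻¹ a_x = (a_u a_v) a_x = a_u a_w⁻¹`. -/
inductive Rule (T : Set (P × P × P)) : P × Bool → P × Bool → Word P → Prop
  | cancel_pos_neg (x : P) : Rule T (x, true) (x, false) []
  | cancel_neg_pos (x : P) : Rule T (x, false) (x, true) []
  | pos_pos {x y z : P} : (x, y, z) ∈ T → Rule T (x, true) (y, true) [(z, false)]
  | neg_neg {x y z : P} : (y, x, z) ∈ T → Rule T (x, false) (y, false) [(z, true)]
  | neg_pos {p x u v w : P} : p ≠ x → (p, u, v) ∈ T → (v, x, w) ∈ T →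
      Rule T (p, false) (x, true) [(u, true), (w, false)]

def Step (T : Set (P × P × P)) (u v : Word P) : Prop :=
  ∃ c₁ c₂ α β t, Rule T α β t ∧ u = c₁ ++ α :: β :: c₂ ∧ v = c₁ ++ t ++ c₂

def IsNormalWord (T : Set (P × P × P)) (l : Word P) : Prop := ∀ v, ¬ Step T l v

def inversions : Word P → ℕ
  | [] => 0
  | (_, true) :: l => inversions l
  | (_, false) :: l => l.countP (fun pb => pb.2) + inversions l

def weight (l : Word P) : ℕ ×ₗ ℕ := toLex (l.length, inversions l)

variable {T : Set (P × P × P)} {α β : P × Bool} {t u v : Word P}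

theorem Rule.step (h : Rule T α β t) (c₁ c₂ : Word P) :
    Step T (c₁ ++ α :: β :: c₂) (c₁ ++ t ++ c₂) :=
  ⟨c₁, c₂, α, β, t, h, rfl, rfl⟩

theorem Step.append (h : Step T u v) (c₁ c₂ : Word P) :
    Step T (c₁ ++ u ++ c₂) (c₁ ++ v ++ c₂) := by
  obtain ⟨d₁, d₂, α, β, t, h, rfl, rfl⟩ := h
  exact ⟨c₁ ++ d₁, d₂ ++ c₂, α, β, t, h, by simp, by simp⟩

theorem inversions_append (l₁ l₂ : Word P) :
    inversions (l₁ ++ l₂) = inversions l₁ + inversions l₂ +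
      l₁.countP (fun pb => !pb.2) * l₂.countP (fun pb => pb.2) := by
  induction l₁ with
  | nil => simp [inversions]
  | cons pb l ih =>
    rcases pb with ⟨x, _ | _⟩
    · simp only [List.cons_append, inversions, List.countP_append, ih, Bool.not_false,
        List.countP_cons_of_pos]
      ring
    · simp [inversions, ih]

theorem Rule.length_lt_or_swap (h : Rule T α β t) :
    t.length < 2 ∨ ∃ u w, α.2 = false ∧ β.2 = true ∧ t = [(u, true), (w, false)] := by
  cases h <;> simp

theorem Step.weight_lt (h : Step T u v) : weight v < weight u := by
  obtain ⟨c₁, c₂, α, β, t, h, rfl, rfl⟩ := h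
  rw [weight, weight, Prod.Lex.toLex_lt_toLex]
  rcases h.length_lt_or_swap with hlt | ⟨u, w, hα, hβ, rfl⟩
  · left
    simp only [List.length_append, List.length_cons]
    omega
  · obtain ⟨p, _⟩ := α
    obtain ⟨x, _⟩ := β
    subst hα hβ
    right
    simp [inversions_append, inversions]

theorem Step.length_le (h : Step T u v) : v.length ≤ u.length :=
  Prod.Lex.monotone_fst _ _ h.weight_lt.le

theorem Step.perm_signs_of_length_eq (h : Step T u v) (hl : v.length = u.length) :
    (v.map Prod.snd).Perm (u.map Prod.snd) := by
  obtain ⟨c₁, c₂, α, β, t, h, rfl, rfl⟩ := h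
  rcases h.length_lt_or_swap with hlt | ⟨u, w, hα, hβ, rfl⟩
  · simp only [List.length_append, List.length_cons] at hl
    omega
  · simpa [hα, hβ] using ((List.Perm.swap true false _).append_left _).symm

theorem wellFounded_flip_step : WellFounded (flip (Step T)) :=
  Subrelation.wf (fun h => h.weight_lt) (InvImage.wf weight wellFounded_lt)

theorem length_le_of_reflTransGen (h : ReflTransGen (Step T) u v) : v.length ≤ u.length := by
  induction h with
  | refl => rfl
  | tail _ hst ih => exact hst.length_le.trans ih

theorem perm_signs_of_reflTransGen (h : ReflTransGen (Step T) u v) (hl : v.length = u.length) :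
    (v.map Prod.snd).Perm (u.map Prod.snd) := by
  induction h with
  | refl => rfl
  | @tail w v hw hst ih =>
    have h₁ := hst.length_le
    have h₂ := length_le_of_reflTransGen hw
    exact (hst.perm_signs_of_length_eq (by omega)).trans (ih (by omega))

end Rewriting

section Confluence

variable {P : Type*} {T : Set (P × P × P)} {α β γ : P × Bool} {t t' u v : Word P}

open Rule

theorem join_of_overlap_pos (hT : IsTriella T) {y : P} (h₁ : Rule T α (y, true) t)
    (h₂ : Rule T (y, true) γ t') : Join (ReflTransGen (Step T)) (t ++ [γ]) (α :: t') := by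
  cases h₁ with
  | cancel_neg_pos =>
    cases h₂ with
    | cancel_pos_neg => exact ⟨_, .refl, .refl⟩
    | pos_pos h => exact ⟨_, .refl, .single ((neg_neg (hT.rotate₂ h)).step [] [])⟩
  | @pos_pos x _ z h =>
    cases h₂ with
    | cancel_pos_neg => exact ⟨_, .single ((neg_neg (hT.rotate h)).step [] []), .refl⟩
    | @pos_pos _ c z' h' =>
      by_cases hzc : z = c
      · subst hzc
        obtain rfl : z' = x := hT.functional h' (hT.rotate h)
        exact ⟨[], .single ((cancel_neg_pos z).step [] []),
          .single ((cancel_pos_neg z').step [] [])⟩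
      · exact ⟨_, .single ((neg_pos hzc (hT.rotate₂ h) h').step [] []), .refl⟩
  | @neg_pos p _ u v w hpx h h' =>
    cases h₂ with
    | cancel_pos_neg =>
      exact ⟨_, .head ((neg_neg (hT.rotate h')).step [(u, true)] [])
        (.single ((pos_pos (hT.rotate h)).step [] [])), .refl⟩
    | @pos_pos _ c z' h'' =>
      by_cases hwc : w = c
      · subst hwc
        obtain rfl : z' = v := hT.functional h'' (hT.rotate h')
        exact ⟨_, .single ((cancel_neg_pos w).step [(u, true)] []),
          .single ((neg_neg (hT.rotate₂ h)).step [] [])⟩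
      · exact ⟨_, .head ((neg_pos hwc (hT.rotate₂ h') h'').step [(u, true)] [])
          (.single ((pos_pos (hT.rotate h)).step [] [(z', false)])), .refl⟩

theorem join_of_overlap_neg (hT : IsTriella T) {y : P} (h₁ : Rule T α (y, false) t)
    (h₂ : Rule T (y, false) γ t') : Join (ReflTransGen (Step T)) (t ++ [γ]) (α :: t') := by
  cases h₁ with
  | cancel_pos_neg =>
    cases h₂ with
    | cancel_neg_pos => exact ⟨_, .refl, .refl⟩
    | neg_neg h => exact ⟨_, .refl, .single ((pos_pos (hT.rotate h)).step [] [])⟩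
    | neg_pos _ h h' =>
      exact ⟨_, .refl, .head ((pos_pos h).step [] [_])
        (.single ((neg_neg (hT.rotate₂ h')).step [] []))⟩
  | @neg_neg x _ z h =>
    cases h₂ with
    | cancel_neg_pos => exact ⟨_, .single ((pos_pos (hT.rotate₂ h)).step [] []), .refl⟩
    | @neg_neg _ g r h' =>
      by_cases hxr : x = r
      · subst hxr
        obtain rfl : z = g := hT.functional h (hT.rotate h')
        exact ⟨[], .single ((cancel_pos_neg z).step [] []),
          .single ((cancel_neg_pos x).step [] [])⟩
      · exact ⟨_, .refl, .single ((neg_pos hxr (hT.rotate h) (hT.rotate h')).step [] [])⟩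
    | @neg_pos _ g u v w _ h' h'' =>
      by_cases hxu : x = u
      · subst hxu
        obtain rfl : v = z := hT.functional h' h
        exact ⟨_, .single ((pos_pos h'').step [] []),
          .single ((cancel_neg_pos x).step [] [_])⟩
      · exact ⟨_, .refl, .head ((neg_pos hxu (hT.rotate h) h').step [] [_])
          (.single ((neg_neg (hT.rotate₂ h'')).step [(z, true)] []))⟩

theorem join_of_overlap (hT : IsTriella T) (h₁ : Rule T α β t) (h₂ : Rule T β γ t') :
    Join (ReflTransGen (Step T)) (t ++ [γ]) (α :: t') := by
  obtain ⟨y, _ | _⟩ := β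
  exacts [join_of_overlap_neg hT h₁ h₂, join_of_overlap_pos hT h₁ h₂]

theorem Rule.eq (hT : IsPlanarTriella T) (h : Rule T α β t) (h' : Rule T α β t') : t = t' := by
  cases h with
  | cancel_pos_neg => cases h'; rfl
  | cancel_neg_pos =>
    cases h' with
    | cancel_neg_pos => rfl
    | neg_pos hne => exact absurd rfl hne
  | pos_pos h => cases h' with | pos_pos h' => rw [hT.functional h h']
  | neg_neg h => cases h' with | neg_neg h' => rw [hT.functional h h']
  | neg_pos hne h₁ h₂ =>
    cases h' with
    | cancel_neg_pos => exact absurd rfl hne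
    | neg_pos _ h₁' h₂' =>
      obtain rfl :=
        hT.eq_of_adj_adj hne ⟨_, hT.rotate₂ h₁⟩ ⟨_, h₂⟩ ⟨_, hT.rotate₂ h₁'⟩ ⟨_, h₂'⟩
      rw [hT.functional_snd h₁ h₁', hT.functional h₂ h₂']

theorem join_append {x y : Word P} (h : Join (ReflTransGen (Step T)) x y) (c₁ c₂ : Word P) :
    Join (ReflTransGen (Step T)) (c₁ ++ x ++ c₂) (c₁ ++ y ++ c₂) :=
  let lift :=
    ReflTransGen.lift (fun l => c₁ ++ l ++ c₂) fun _ _ (h : Step T _ _) => h.append c₁ c₂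
  let ⟨z, hxz, hyz⟩ := h
  ⟨c₁ ++ z ++ c₂, lift _ _ hxz, lift _ _ hyz⟩

theorem Step.join (hT : IsPlanarTriella T) {v' : Word P} (h₁ : Step T u v) (h₂ : Step T u v') :
    Join (ReflTransGen (Step T)) v v' := by
  obtain ⟨c₁, c₂, α, β, t, h, rfl, rfl⟩ := h₁
  obtain ⟨d₁, d₂, α', β', t', h', hu, rfl⟩ := h₂
  rcases List.append_cons_cons_eq_append_cons_cons hu with
    ⟨rfl, rfl, rfl, rfl⟩ | ⟨m, rfl, rfl⟩ | ⟨m, rfl, rfl⟩ | ⟨rfl, rfl, rfl⟩ | ⟨rfl, rfl, rfl⟩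
  · rw [h.eq hT h']
    exact ⟨_, .refl, .refl⟩
  · exact ⟨c₁ ++ t ++ (m ++ t' ++ d₂), .single (by simpa using h'.step (c₁ ++ t ++ m) d₂),
      .single (by simpa using h.step c₁ (m ++ t' ++ d₂))⟩
  · exact ⟨d₁ ++ t' ++ (m ++ t ++ c₂), .single (by simpa using h'.step d₁ (m ++ t ++ c₂)),
      .single (by simpa using h.step (d₁ ++ t' ++ m) c₂)⟩
  · simpa using join_append (join_of_overlap hT.toIsTriella h h') c₁ d₂
  · obtain ⟨z, h₁, h₂⟩ := join_append (join_of_overlap hT.toIsTriella h' h) d₁ c₂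
    exact ⟨z, by simpa using h₂, by simpa using h₁⟩

theorem IsPlanarTriella.church_rosser (hT : IsPlanarTriella T) {u v v' : Word P}
    (h : ReflTransGen (Step T) u v) (h' : ReflTransGen (Step T) u v') :
    Join (ReflTransGen (Step T)) v v' :=
  church_rosser_of_wellFounded wellFounded_flip_step (fun _ _ _ => Step.join hT) h h'

end Confluence

section Evaluation

variable {P : Type} {T : Set (P × P × P)} {α β : P × Bool} {t u v : Word P}

variable (T) in
def eval (l : Word P) : A2TildeGroup T := (l.map (letterEval T)).prod

@[simp] theorem eval_nil : eval T [] = 1 := rfl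

@[simp] theorem eval_cons (pb : P × Bool) (l : Word P) :
    eval T (pb :: l) = letterEval T pb * eval T l := List.prod_cons

@[simp] theorem eval_append (l₁ l₂ : Word P) : eval T (l₁ ++ l₂) = eval T l₁ * eval T l₂ := by
  simp [eval]

@[simp] theorem letterEval_pos (x : P) : letterEval T (x, true) = a T x := rfl

@[simp] theorem letterEval_neg (x : P) : letterEval T (x, false) = (a T x)⁻¹ := rfl

theorem a_mul_a_mul_a {x y z : P} (h : (x, y, z) ∈ T) : a T x * a T y * a T z = 1 :=
  PresentedGroup.mk_eq_one_iff.2 (Subgroup.subset_normalClosure ⟨_, h, rfl⟩)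

theorem Rule.eval_eq (h : Rule T α β t) : letterEval T α * letterEval T β = eval T t := by
  cases h with
  | cancel_pos_neg | cancel_neg_pos => simp
  | pos_pos h => simpa [eq_inv_iff_mul_eq_one] using a_mul_a_mul_a h
  | neg_neg h => simpa [← mul_inv_rev, inv_eq_iff_mul_eq_one] using a_mul_a_mul_a h
  | @neg_pos p x u v w _ h h' =>
    have h₁ : (a T p)⁻¹ = a T u * a T v := by
      simpa [inv_eq_iff_mul_eq_one, mul_assoc] using a_mul_a_mul_a h
    have h₂ : a T v * a T x = (a T w)⁻¹ := by
      simpa [eq_inv_iff_mul_eq_one] using a_mul_a_mul_a h'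
    simp [h₁, mul_assoc, h₂]

theorem Step.eval_eq (h : Step T u v) : eval T u = eval T v := by
  obtain ⟨c₁, c₂, α, β, t, h, rfl, rfl⟩ := h
  simp [← h.eval_eq, mul_assoc]

theorem eval_eq_of_reflTransGen (h : ReflTransGen (Step T) u v) : eval T u = eval T v := by
  induction h with
  | refl => rfl
  | tail _ hst ih => exact ih.trans hst.eval_eq

end Evaluation

section Presentation

variable {P : Type} {T : Set (P × P × P)} {u v : Word P}

theorem eqvGen_append (h : EqvGen (Step T) u v) (c₁ c₂ : Word P) :
    EqvGen (Step T) (c₁ ++ u ++ c₂) (c₁ ++ v ++ c₂) := by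
  induction h with
  | rel _ _ h => exact .rel _ _ (h.append c₁ c₂)
  | refl => exact .refl _
  | symm _ _ _ ih => exact ih.symm
  | trans _ _ _ _ _ ih₁ ih₂ => exact ih₁.trans _ _ _ ih₂

variable (T) in
def stepCon : Con (FreeMonoid (P × Bool)) where
  r u v := EqvGen (Step T) u.toList v.toList
  iseqv := EqvGen.is_equivalence _ |>.comap _
  mul' {u v w x} h₁ h₂ := by
    have h₁' := eqvGen_append h₁ [] w.toList
    have h₂' := eqvGen_append h₂ v.toList []
    simp only [List.nil_append, List.append_nil] at h₁' h₂'
    simpa using h₁'.trans _ _ _ h₂'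

variable (T) in
def letterUnit (x : P) : ((stepCon T).Quotient)ˣ where
  val := FreeMonoid.of (x, true)
  inv := FreeMonoid.of (x, false)
  val_inv := (stepCon T).eq.2 (.rel _ _ ((Rule.cancel_pos_neg x).step [] []))
  inv_val := (stepCon T).eq.2 (.rel _ _ ((Rule.cancel_neg_pos x).step [] []))

variable (T) in
def toUnits : A2TildeGroup T →* ((stepCon T).Quotient)ˣ :=
  PresentedGroup.toGroup (f := letterUnit T) <| by
    rintro _ ⟨⟨x, y, z⟩, h, rfl⟩
    ext
    refine (stepCon T).eq.2 ?_
    exact .trans _ _ _ (.rel _ _ ((Rule.pos_pos h).step [] [_]))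
      (.rel _ _ ((Rule.cancel_neg_pos z).step [] []))

theorem toUnits_a (x : P) : toUnits T (a T x) = letterUnit T x :=
  PresentedGroup.toGroup.of _

theorem toUnits_eval (l : Word P) :
    (toUnits T (eval T l) : (stepCon T).Quotient) = FreeMonoid.ofList l := by
  induction l with
  | nil => rfl
  | cons pb l ih =>
    obtain ⟨x, _ | _⟩ := pb <;>
    · simp only [eval_cons, letterEval_neg, letterEval_pos, map_mul, map_inv, Units.val_mul, ih,
        toUnits_a]
      rfl

theorem eqvGen_of_eval_eq (h : eval T u = eval T v) : EqvGen (Step T) u v :=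
  (stepCon T).eq.1 <| by
    have := congrArg (fun g => (toUnits T g : (stepCon T).Quotient)) h
    rwa [toUnits_eval, toUnits_eval] at this

theorem eval_eq_mk (l : Word P) : eval T l = PresentedGroup.mk _ (FreeGroup.mk l) := by
  rw [show PresentedGroup.mk (A2Rels T) = FreeGroup.lift (a T) from
    FreeGroup.ext_hom _ _ fun _ => rfl, FreeGroup.lift_mk]
  refine congrArg List.prod (List.map_congr_left ?_)
  rintro ⟨x, _ | _⟩ _ <;> rfl

theorem eval_surjective : Function.Surjective (eval T) := by
  classical
  intro w
  obtain ⟨g, rfl⟩ := PresentedGroup.mk_surjective _ w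
  exact ⟨g.toWord, by rw [eval_eq_mk, FreeGroup.mk_toWord]⟩

theorem rev_rev : rev (rev T) = T := rfl

variable (T) in
def reverseHom : A2TildeGroup T →* (A2TildeGroup (rev T))ᵐᵒᵖ :=
  PresentedGroup.toGroup (f := fun x => .op (a (rev T) x)) <| by
    rintro _ ⟨⟨x, y, z⟩, h, rfl⟩
    simp only [map_mul, FreeGroup.lift_apply_of, ← MulOpposite.op_mul, ← mul_assoc]
    exact congrArg MulOpposite.op (a_mul_a_mul_a (T := rev T) h)

theorem reverseHom_a (x : P) : reverseHom T (a T x) = .op (a (rev T) x) :=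
  PresentedGroup.toGroup.of _

theorem reverseHom_eval (l : Word P) :
    reverseHom T (eval T l) = .op (eval (rev T) l.reverse) := by
  induction l with
  | nil => rfl
  | cons pb l ih =>
    obtain ⟨x, _ | _⟩ := pb <;>
      simp [ih, reverseHom_a]

theorem eval_rev_reverse_eq_of_eval_eq (h : eval T u = eval T v) :
    eval (rev T) u.reverse = eval (rev T) v.reverse := by
  simpa [reverseHom_eval] using congrArg (reverseHom T) h

theorem eval_rev_reverse_eq_unop_iff {l : Word P} {w : A2TildeGroup T} :
    eval (rev T) l.reverse = (reverseHom T w).unop ↔ eval T l = w := by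
  obtain ⟨l₀, rfl⟩ := eval_surjective w
  rw [reverseHom_eval, MulOpposite.unop_op]
  refine ⟨fun h => ?_, eval_rev_reverse_eq_of_eval_eq⟩
  simpa [rev_rev] using eval_rev_reverse_eq_of_eval_eq h

end Presentation

section NormalWords

variable {P : Type*} {T : Set (P × P × P)}

variable (T) in
def Admissible : P × Bool → P × Bool → Prop
  | (p, true), (q, true) => ¬ Adj T p q
  | (p, false), (q, false) => ¬ Adj T q p
  | (p, true), (q, false) => p ≠ q
  | (_, false), (_, true) => False

def wordOf (xs ys : List P) : Word P := xs.map (·, true) ++ ys.map (·, false)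

theorem admissible_iff_forall_not_rule (hT : IsPlanarTriella T) {α β : P × Bool} :
    Admissible T α β ↔ ∀ t, ¬ Rule T α β t := by
  obtain ⟨p, _ | _⟩ := α <;> obtain ⟨q, _ | _⟩ := β
  · refine ⟨fun h t hr => ?_, fun h ⟨z, hz⟩ => h _ (.neg_neg hz)⟩
    cases hr with | neg_neg hz => exact h ⟨_, hz⟩
  · simp only [Admissible, false_iff, not_forall, not_not]
    rcases eq_or_ne p q with rfl | hpq
    · exact ⟨_, .cancel_neg_pos p⟩
    · obtain ⟨v, ⟨u, hu⟩, ⟨w, hw⟩⟩ := hT.exists_adj_adj p q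
      exact ⟨_, .neg_pos hpq (hT.rotate hu) hw⟩
  · refine ⟨fun h t hr => ?_, fun h (hpq : p = q) => ?_⟩
    · cases hr
      exact h rfl
    · subst hpq
      exact h _ (.cancel_pos_neg p)
  · refine ⟨fun h t hr => ?_, fun h ⟨z, hz⟩ => h _ (.pos_pos hz)⟩
    cases hr with | pos_pos hz => exact h ⟨_, hz⟩

theorem isNormalWord_iff_isChain (hT : IsPlanarTriella T) {l : Word P} :
    IsNormalWord T l ↔ l.IsChain (Admissible T) := by
  rw [List.isChain_iff_forall_rel_of_append_cons_cons]
  constructor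
  · rintro h α β c₁ c₂ rfl
    exact (admissible_iff_forall_not_rule hT).2 fun t ht => h _ (ht.step c₁ c₂)
  · rintro h v ⟨c₁, c₂, α, β, t, ht, rfl, rfl⟩
    exact (admissible_iff_forall_not_rule hT).1 (h rfl) t ht

theorem exists_eq_wordOf_of_isChain {l : Word P} (h : l.IsChain (Admissible T)) :
    ∃ xs ys, l = wordOf xs ys := by
  induction l with
  | nil => exact ⟨[], [], rfl⟩
  | cons pb l ih =>
    obtain ⟨xs, ys, rfl⟩ := ih h.tail
    obtain ⟨x, _ | _⟩ := pb
    · cases xs with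
      | nil => exact ⟨[], x :: ys, rfl⟩
      | cons => exact (List.isChain_cons_cons.1 h).1.elim
    · exact ⟨x :: xs, ys, rfl⟩

theorem isChain_wordOf_iff {xs ys : List P} :
    (wordOf xs ys).IsChain (Admissible T) ↔ xs.IsChain (fun p q => ¬ Adj T p q) ∧
      ys.IsChain (fun p q => ¬ Adj T q p) ∧ ∀ x ∈ xs.getLast?, ∀ y ∈ ys.head?, x ≠ y := by
  simp [wordOf, List.isChain_append, List.isChain_map, Admissible]

theorem wordOf_inj {xs ys xs' ys' : List P} :
    wordOf xs ys = wordOf xs' ys' ↔ xs = xs' ∧ ys = ys' := by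
  refine ⟨fun h => ?_, by rintro ⟨rfl, rfl⟩; rfl⟩
  have hx := congrArg (List.filterMap fun pb => if pb.2 then some pb.1 else none) h
  have hy := congrArg (List.filterMap fun pb => if pb.2 then none else some pb.1) h
  simp only [wordOf, List.filterMap_append, List.filterMap_map] at hx hy
  simpa [Function.comp_def] using And.intro hx hy

end NormalWords

section NormalForms

variable {P : Type} {T : Set (P × P × P)} {w : A2TildeGroup T} {xs ys ss ts : List P}
  {l : Word P}

variable (T) in
def IsNormalForm (w : A2TildeGroup T) (xs ys : List P) : Prop :=
  IsNormalWord T (wordOf xs ys) ∧ eval T (wordOf xs ys) = w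

theorem IsPlanarTriella.reflTransGen_of_eval_eq (hT : IsPlanarTriella T) {n : Word P}
    (hn : IsNormalWord T n) (h : eval T l = eval T n) : ReflTransGen (Step T) l n := by
  obtain ⟨d, hld, hnd⟩ := join_of_eqvGen (fun _ _ _ => hT.church_rosser) (eqvGen_of_eval_eq h)
  rwa [hnd.eq_of_forall_not hn] at hld

theorem IsPlanarTriella.exists_isNormalForm (hT : IsPlanarTriella T) (w : A2TildeGroup T) :
    ∃ xs ys, IsNormalForm T w xs ys := by
  obtain ⟨l, rfl⟩ := eval_surjective w
  obtain ⟨n, hln, hn⟩ := exists_reflTransGen_forall_not wellFounded_flip_step l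
  obtain ⟨xs, ys, rfl⟩ := exists_eq_wordOf_of_isChain ((isNormalWord_iff_isChain hT).1 hn)
  exact ⟨xs, ys, hn, (eval_eq_of_reflTransGen hln).symm⟩

namespace IsNormalForm

variable (hT : IsPlanarTriella T) (h : IsNormalForm T w xs ys)
include hT h

theorem unique {xs' ys' : List P} (h' : IsNormalForm T w xs' ys') : (xs', ys') = (xs, ys) :=
  Prod.ext_iff.2 <| wordOf_inj.1 <|
    (hT.reflTransGen_of_eval_eq h'.1 (h.2.trans h'.2.symm)).eq_of_forall_not h.1

theorem length_add_le (hl : eval T l = w) : xs.length + ys.length ≤ l.length := by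
  simpa [wordOf] using
    length_le_of_reflTransGen (hT.reflTransGen_of_eval_eq h.1 (hl.trans h.2.symm))

theorem countP_eq (hl : eval T l = w) (hlen : l.length = xs.length + ys.length) :
    l.countP (fun pb => pb.2) = xs.length ∧ l.countP (fun pb => !pb.2) = ys.length := by
  have hperm := perm_signs_of_reflTransGen
    (hT.reflTransGen_of_eval_eq h.1 (hl.trans h.2.symm)) (by simp [wordOf, hlen])
  simpa [wordOf, List.countP_map, Function.comp_def, List.countP_replicate] using
    And.intro (hperm.countP_eq id).symm (hperm.countP_eq (!·)).symm

end IsNormalForm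

theorem IsNormalForm.length_eq_of_rev (hT : IsPlanarTriella T) (hT' : IsPlanarTriella (rev T))
    (h : IsNormalForm T w xs ys) (h' : IsNormalForm (rev T) (reverseHom T w).unop ss ts) :
    ss.length = xs.length ∧ ts.length = ys.length := by
  have hl : eval T (wordOf ss ts).reverse = w :=
    eval_rev_reverse_eq_unop_iff.1 (by simpa using h'.2)
  have hlen : (wordOf ss ts).reverse.length = xs.length + ys.length := by
    have h₁ := h.length_add_le hT hl
    have h₂ := h'.length_add_le hT' (l := (wordOf xs ys).reverse)
      (eval_rev_reverse_eq_unop_iff.2 h.2)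
    simp only [List.length_reverse, wordOf, List.length_append, List.length_map] at h₁ h₂ ⊢
    omega
  simpa [wordOf, List.countP_map, Function.comp_def] using h.countP_eq hT hl hlen

end NormalForms

section RightLeftNormalForms

variable {P L : Type} [Membership P L] {σ : P ≃ L} {T : Set (P × P × P)} {w : A2TildeGroup T}
  {xs ys ts ss : List P}

theorem isRNF_iff_isNormalForm (hT : IsPlanarTriella T)
    (hT1 : ∀ x y : P, (∃ z, (x, y, z) ∈ T) ↔ y ∈ σ x) :
    IsRNF σ T w xs ys ↔ IsNormalForm T w xs ys := by
  have hadj : Adj T = fun x y => y ∈ σ x := funext₂ fun x y => propext (hT1 x y)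
  rw [IsRNF, IsNormalForm, isNormalWord_iff_isChain hT, isChain_wordOf_iff, hadj, eq_comm]
  simp only [List.Chain', Option.mem_def, ne_eq, eval, wordOf, List.map_append, List.map_map,
    Function.comp_def, letterEval_pos, letterEval_neg, List.prod_append]
  tauto

theorem isLNF_iff_isNormalForm_rev (hT : IsPlanarTriella (rev T))
    (hT1 : ∀ x y : P, (∃ z, (x, y, z) ∈ T) ↔ y ∈ σ x) :
    IsLNF σ T w ts ss ↔ IsNormalForm (rev T) (reverseHom T w).unop ss.reverse ts.reverse := by
  have hT₀ : IsTriella T := hT.rev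
  have hadj : Adj (rev T) = fun x y => x ∈ σ y :=
    funext₂ fun x y => propext (hT₀.adj_rev_iff.trans (hT1 y x))
  have hword :
      wordOf ss.reverse ts.reverse = (ts.map (·, false) ++ ss.map (·, true)).reverse := by
    simp [wordOf]
  rw [IsLNF, IsNormalForm, isNormalWord_iff_isChain hT, isChain_wordOf_iff, hadj, hword,
    eval_rev_reverse_eq_unop_iff, eq_comm]
  simp only [List.Chain', Option.mem_def, ne_eq, List.isChain_reverse, List.getLast?_reverse,
    List.head?_reverse, eval, List.map_append, List.map_map, Function.comp_def, letterEval_neg,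
    letterEval_pos, List.prod_append]
  tauto

end RightLeftNormalForms

end A2Tilde

open A2Tilde in
theorem a2_normal_forms_general (P L : Type) [Membership P L]
    [Configuration.ProjectivePlane P L] (σ : P ≃ L) (T : Set (P × P × P))
    (hT1 : ∀ x y : P, (∃ z, (x, y, z) ∈ T) ↔ y ∈ σ x)
    (hT2 : ∀ x y z : P, (x, y, z) ∈ T → (y, z, x) ∈ T)
    (hT3 : ∀ x y z z' : P, (x, y, z) ∈ T → (x, y, z') ∈ T → z = z') :
    ∀ w : A2TildeGroup T, ∃ m n : ℕ,
      (∃! p : List P × List P, IsRNF σ T w p.1 p.2) ∧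
      (∀ xs ys : List P, IsRNF σ T w xs ys → xs.length = m ∧ ys.length = n) ∧
      (∃! q : List P × List P, IsLNF σ T w q.1 q.2) ∧
      (∀ ts ss : List P, IsLNF σ T w ts ss → ts.length = n ∧ ss.length = m) ∧
      (∀ l : List (P × Bool), (l.map (letterEval T)).prod = w →
        m + n ≤ l.length ∧
        (l.length = m + n →
          (l.filter fun pb => pb.2).length = m ∧
          (l.filter fun pb => !pb.2).length = n)) := by
  intro w
  have hT₀ : IsTriella T := ⟨hT2 _ _ _, hT3 _ _ _ _⟩
  have hT : IsPlanarTriella T := hT₀.isPlanarTriella_of_incidence (Equiv.refl P) σ hT1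
  have hT' : IsPlanarTriella (rev T) :=
    hT₀.rev.isPlanarTriella_of_incidence (P' := Dual L) (L' := Dual P) σ (Equiv.refl P)
      fun v p => hT₀.adj_rev_iff.trans (hT1 p v)
  have hR (xs ys) := isRNF_iff_isNormalForm (w := w) (xs := xs) (ys := ys) hT hT1
  have hL (ts ss) := isLNF_iff_isNormalForm_rev (w := w) (ts := ts) (ss := ss) hT' hT1
  obtain ⟨xs, ys, hxy⟩ := hT.exists_isNormalForm w
  obtain ⟨ss, ts, hst⟩ := hT'.exists_isNormalForm (reverseHom T w).unop
  refine ⟨xs.length, ys.length,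
    ⟨(xs, ys), (hR _ _).2 hxy, fun p hp => hxy.unique hT ((hR _ _).1 hp)⟩,
    fun xs' ys' h => ?_,
    ⟨(ts.reverse, ss.reverse), (hL _ _).2 (by simpa using hst), fun q hq => ?_⟩,
    fun ts' ss' h => ?_,
    fun l hl => ⟨hxy.length_add_le hT hl, fun hlen => ?_⟩⟩
  · cases hxy.unique hT ((hR _ _).1 h)
    exact ⟨rfl, rfl⟩
  · obtain ⟨rfl, rfl⟩ := Prod.mk.inj (hst.unique hT' ((hL _ _).1 hq))
    simp
  · simpa [and_comm] using hxy.length_eq_of_rev hT hT' ((hL _ _).1 h)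
  · simpa [List.countP_eq_length_filter] using hxy.countP_eq hT hl hlen

/-- normal forms in A₂-tilde groups (Proposition 3.2 of
Cartwright–Mantero–Steger–Zappa): every element `w` has a unique right normal form and a
unique left normal form, with matching lengths `(m, n)`, these are of minimal length
among words representing `w`, and any representative word of minimal length `m + n`
contains exactly `m` generators and `n` inverses of generators. -/
theorem a2_normal_forms (P L : Type) [Fintype P] [Fintype L] [Membership P L]
    [Configuration.ProjectivePlane P L] (σ : P ≃ L) (T : Set (P × P × P))
    (hT1 : ∀ x y : P, (∃ z, (x, y, z) ∈ T) ↔ y ∈ σ x)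
    (hT2 : ∀ x y z : P, (x, y, z) ∈ T → (y, z, x) ∈ T)
    (hT3 : ∀ x y z z' : P, (x, y, z) ∈ T → (x, y, z') ∈ T → z = z') :
    ∀ w : A2TildeGroup T, ∃ m n : ℕ,
      (∃! p : List P × List P, IsRNF σ T w p.1 p.2) ∧
      (∀ xs ys : List P, IsRNF σ T w xs ys → xs.length = m ∧ ys.length = n) ∧
      (∃! q : List P × List P, IsLNF σ T w q.1 q.2) ∧
      (∀ ts ss : List P, IsLNF σ T w ts ss → ts.length = n ∧ ss.length = m) ∧
      (∀ l : List (P × Bool), (l.map (letterEval T)).prod = w →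
        m + n ≤ l.length ∧
        (l.length = m + n →
          (l.filter fun pb => pb.2).length = m ∧
          (l.filter fun pb => !pb.2).length = n)) :=
  a2_normal_forms_general P L σ T hT1 hT2 hT3
end
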